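/- arXiv:2205.07710 — 4 statements merged into one kernel-verified Lean document; each statement's English description precedes it below -/
import Mathlib

section
/- Let M_n be the n×n real tridiagonal matrix with diagonal entries (1, 2, 2, ..., 2) and sub- /super-diagonal entries all equal to -1. Then the least eigenvalue of M_n is 4 sin²(π/(4n+2)). -/
/-!
The vector `w j = cos ((2 j + 1) π / (4 n + 2))`, `0 ≤ j < n`, is a positive eigenvector of `M n`
with eigenvalue `4 sin² (π / (4 n + 2))`: the three-term recurrence is the identity
`cos (a - 2θ) + cos (a + 2θ) = (2 - 4 sin² θ) cos a`, and the two boundary rows hold because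
`cos (-θ) = cos θ` and `cos ((2 n + 1) θ) = cos (π / 2) = 0`.

For a symmetric matrix `A` with nonpositive off-diagonal entries, the eigenvalue `c` of a positive
eigenvector `w` is the least one (ground state transform): writing `x i = w i * y i`,
`xᵀ A x - c ‖x‖² = -½ ∑ i j, A i j * w i * w j * (y i - y j)² ≥ 0`.
-/

/-- The `n × n` tridiagonal matrix with diagonal `(1, 2, 2, ..., 2)` and
off-diagonal entries `-1`. -/
def M (n : ℕ) : Matrix (Fin n) (Fin n) ℝ :=
  Matrix.of fun i j =>
    if i = j then (if (i : ℕ) = 0 then 1 else 2)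
    else if (i : ℕ) + 1 = (j : ℕ) ∨ (j : ℕ) + 1 = (i : ℕ) then -1 else 0

open Matrix Finset Real Module End

namespace Matrix

variable {ι : Type*} [Fintype ι]

theorem mem_spectrum_iff_exists_mulVec_eq_smul {K : Type*} [Field K] [DecidableEq ι]
    {A : Matrix ι ι K} {μ : K} : μ ∈ spectrum K A ↔ ∃ v ≠ 0, A *ᵥ v = μ • v := by
  rw [← spectrum_toLin', ← hasEigenvalue_iff_mem_spectrum, hasEigenvalue_iff,
    Submodule.ne_bot_iff]
  simp only [mem_eigenspace_iff, toLin'_apply, and_comm]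

variable {A : Matrix ι ι ℝ} {w : ι → ℝ} {c : ℝ}

theorem mul_dotProduct_self_le_dotProduct_mulVec (hA : A.IsSymm)
    (hoff : ∀ i j, i ≠ j → A i j ≤ 0) (hw : ∀ i, 0 < w i) (hAw : A *ᵥ w = c • w)
    (x : ι → ℝ) : c * (x ⬝ᵥ x) ≤ x ⬝ᵥ (A *ᵥ x) := by
  set y : ι → ℝ := fun i => x i / w i
  have hx : ∀ i, x i = w i * y i := fun i => (mul_div_cancel₀ _ (hw i).ne').symm
  have hdiag : ∑ i, ∑ j, A i j * w j * (w i * y i ^ 2) = c * (x ⬝ᵥ x) := by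
    simp only [← sum_mul, dotProduct, mul_sum, hx]
    refine sum_congr rfl fun i _ => ?_
    rw [show ∑ j, A i j * w j = c * w i from congrFun hAw i]
    ring
  have hdiag' : ∑ i, ∑ j, A i j * w i * (w j * y j ^ 2) = c * (x ⬝ᵥ x) := by
    rw [sum_comm, ← hdiag]
    exact sum_congr rfl fun i _ => sum_congr rfl fun j _ => by rw [hA.apply i j]
  have hform : ∑ i, ∑ j, A i j * (w i * y i) * (w j * y j) = x ⬝ᵥ (A *ᵥ x) := by
    simp only [dotProduct, mulVec, mul_sum, hx]
    exact sum_congr rfl fun i _ => sum_congr rfl fun j _ => by ring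
  have hexpand : ∑ i, ∑ j, A i j * (w i * w j * (y i - y j) ^ 2) =
      ∑ i, ∑ j, A i j * w j * (w i * y i ^ 2) + ∑ i, ∑ j, A i j * w i * (w j * y j ^ 2)
        - 2 * ∑ i, ∑ j, A i j * (w i * y i) * (w j * y j) := by
    simp only [mul_sum, ← sum_add_distrib, ← sum_sub_distrib]
    exact sum_congr rfl fun i _ => sum_congr rfl fun j _ => by ring
  have hnonpos : ∑ i, ∑ j, A i j * (w i * w j * (y i - y j) ^ 2) ≤ 0 := by
    refine sum_nonpos fun i _ => sum_nonpos fun j _ => ?_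
    rcases eq_or_ne i j with rfl | hij
    · simp
    · have := hw i
      have := hw j
      exact mul_nonpos_of_nonpos_of_nonneg (hoff i j hij) (by positivity)
  linarith

theorem isLeast_spectrum_of_mulVec_eq_smul_of_pos [DecidableEq ι] [Nonempty ι] (hA : A.IsSymm)
    (hoff : ∀ i j, i ≠ j → A i j ≤ 0) (hw : ∀ i, 0 < w i) (hAw : A *ᵥ w = c • w) :
    IsLeast (spectrum ℝ A) c := by
  refine ⟨mem_spectrum_iff_exists_mulVec_eq_smul.2 ⟨w, ?_, hAw⟩, fun μ hμ => ?_⟩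
  · obtain ⟨i⟩ := ‹Nonempty ι›
    exact fun h => (hw i).ne' (congrFun h i)
  · obtain ⟨v, hv, hAv⟩ := mem_spectrum_iff_exists_mulVec_eq_smul.1 hμ
    have hle := mul_dotProduct_self_le_dotProduct_mulVec hA hoff hw hAw v
    rw [hAv, dotProduct_smul, smul_eq_mul] at hle
    exact le_of_mul_le_mul_right hle (by simpa using dotProduct_star_self_pos_iff.2 hv)

end Matrix

theorem Fin.sum_univ_ite_val_eq {β : Type*} [AddCommMonoid β] (n k : ℕ) (f : ℕ → β) :
    ∑ j : Fin n, (if (j : ℕ) = k then f j else 0) = if k < n then f k else 0 := by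
  simp only [Fin.sum_univ_eq_sum_range (fun j => if j = k then f j else 0), sum_ite_eq',
    mem_range]

theorem M_isSymm (n : ℕ) : (M n).IsSymm :=
  IsSymm.ext fun i j => by
    simp only [M, of_apply]
    split_ifs <;> first | rfl | (simp only [Fin.ext_iff] at *; omega)

theorem M_apply_nonpos {n : ℕ} {i j : Fin n} (hij : i ≠ j) : M n i j ≤ 0 := by
  simp only [M, of_apply, if_neg hij]
  split_ifs <;> norm_num

theorem M_mulVec_apply {n : ℕ} (f : ℕ → ℝ) (hf : f n = 0) (i : Fin n) :
    (M n *ᵥ fun j => f j) i = (if (i : ℕ) = 0 then f 0 else 2 * f i - f (i - 1)) - f (i + 1) := by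
  have hentry : ∀ j : Fin n, M n i j * f j =
      (if (i : ℕ) = 0 then 1 else 2) * (if (j : ℕ) = i then f j else 0)
      - (if (j : ℕ) = i + 1 then f j else 0)
      - (if (i : ℕ) = 0 then 0 else if (j : ℕ) = i - 1 then f j else 0) := by
    intro j
    simp only [M, of_apply, Fin.ext_iff]
    split_ifs <;> first | omega | ring
  have hnext : (if (i : ℕ) + 1 < n then f (i + 1) else 0) = f (i + 1) := by
    split_ifs with h
    · rfl
    · rw [show (i : ℕ) + 1 = n by omega, hf]
  simp only [mulVec, dotProduct, hentry, sum_sub_distrib, ← mul_sum, Fin.sum_univ_ite_val_eq,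
    if_pos i.isLt, hnext]
  split_ifs with h0
  · simp [h0]
  · rw [Fin.sum_univ_ite_val_eq, if_pos (by omega)]
    ring

theorem cos_sub_add_cos_add (a b : ℝ) :
    cos (a - 2 * b) + cos (a + 2 * b) = (2 - 4 * sin b ^ 2) * cos a := by
  rw [cos_sub, cos_add, cos_two_mul_eq_one_sub]
  ring

noncomputable def groundState (n j : ℕ) : ℝ := cos ((2 * j + 1) * (π / (4 * n + 2)))

theorem two_mul_add_one_mul_pi_div (n : ℕ) : (2 * n + 1 : ℝ) * (π / (4 * n + 2)) = π / 2 := by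
  field_simp
  ring

theorem groundState_self (n : ℕ) : groundState n n = 0 := by
  rw [groundState, two_mul_add_one_mul_pi_div, cos_pi_div_two]

theorem groundState_pos {n j : ℕ} (hj : j < n) : 0 < groundState n j := by
  refine cos_pos_of_mem_Ioo ⟨(neg_neg_of_pos (half_pos pi_pos)).trans (by positivity), ?_⟩
  rw [← two_mul_add_one_mul_pi_div n]
  gcongr

theorem M_mulVec_groundState (n : ℕ) :
    M n *ᵥ (fun j : Fin n => groundState n j) =
      (4 * sin (π / (4 * n + 2)) ^ 2) • fun j : Fin n => groundState n j := by
  ext i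
  rw [M_mulVec_apply _ (groundState_self n)]
  simp only [groundState, Pi.smul_apply, smul_eq_mul]
  set θ := π / (4 * n + 2)
  have key := cos_sub_add_cos_add ((2 * i + 1) * θ) θ
  split_ifs with h0
  · rw [h0] at key ⊢
    norm_num at key ⊢
    rw [show θ - 2 * θ = -θ by ring, cos_neg, show θ + 2 * θ = 3 * θ by ring] at key
    linarith
  · rw [show (2 * ((i + 1 : ℕ) : ℝ) + 1) * θ = (2 * i + 1) * θ + 2 * θ by push_cast; ring,
      show (2 * ((i - 1 : ℕ) : ℝ) + 1) * θ = (2 * i + 1) * θ - 2 * θ by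
        rw [Nat.cast_sub (by omega)]; push_cast; ring]
    linarith

theorem stmt4 (n : ℕ) (hn : 0 < n) :
    IsLeast (spectrum ℝ (M n)) (4 * Real.sin (Real.pi / (4 * n + 2)) ^ 2) := by
  have : Nonempty (Fin n) := ⟨⟨0, hn⟩⟩
  exact isLeast_spectrum_of_mulVec_eq_smul_of_pos (M_isSymm n) (fun _ _ => M_apply_nonpos)
    (fun j => groundState_pos j.isLt) (M_mulVec_groundState n)
end

section
/- Let G be a bipartite graph with m edges. Then the spectral radius of G satisfies ρ(G) ≤ √m. -/
/-!
If `μ` is an eigenvalue of the adjacency matrix `A`, then `μ²` is an eigenvalue of `A²`, so it is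
bounded by the largest row sum of `A²`. The row of `A²` at `v` sums to `∑_{u ~ v} deg u`, the number
of walks of length two from `v`. In a triangle-free (in particular a bipartite) graph the
neighbourhood of `v` is independent, so the edges at distinct neighbours are distinct and this sum is
at most the number `m` of edges. Hence `μ² ≤ m`.
-/

open Matrix

section

attribute [local instance] Matrix.linftyOpNormedRing Matrix.linftyOpNormedAlgebra

theorem Matrix.norm_le_of_mem_spectrum {𝕜 n : Type*} [RCLike 𝕜] [Fintype n] [DecidableEq n]
    {M : Matrix n n 𝕜} {K : ℝ} (hM : ∀ i, ∑ j, ‖M i j‖ ≤ K) {μ : 𝕜}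
    (hμ : μ ∈ spectrum 𝕜 M) : ‖μ‖ ≤ K := by
  rcases isEmpty_or_nonempty n with hn | hn
  · simp [spectrum.of_subsingleton] at hμ
  have hK : 0 ≤ K :=
    (Finset.sum_nonneg fun j _ => norm_nonneg (M (Classical.arbitrary n) j)).trans (hM _)
  calc ‖μ‖ ≤ ‖M‖ := spectrum.norm_le_norm_of_mem hμ
    _ ≤ K := by
      rw [linfty_opNorm_def, ← Real.coe_toNNReal K hK, NNReal.coe_le_coe]
      refine Finset.sup_le fun i _ => ?_
      rw [← NNReal.coe_le_coe, Real.coe_toNNReal K hK, NNReal.coe_sum]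
      exact hM i

end

namespace SimpleGraph

open Finset

variable {V : Type*} [Fintype V] {G : SimpleGraph V} [DecidableRel G.Adj]

theorem sum_adjMatrix_mul_self_apply {α : Type*} [NonAssocSemiring α] (v : V) :
    ∑ w, (G.adjMatrix α * G.adjMatrix α) v w = ∑ u ∈ G.neighborFinset v, (G.degree u : α) := by
  simp only [adjMatrix_mul_apply]
  rw [sum_comm]
  simp [← neighborFinset_eq_filter]

variable [DecidableEq V]

theorem IsIndepSet.sum_degree_le_card_edgeFinset {s : Finset V} (hs : G.IsIndepSet s) :
    ∑ v ∈ s, G.degree v ≤ #G.edgeFinset := by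
  have hdisj : (s : Set V).PairwiseDisjoint (G.incidenceFinset ·) := by
    intro a ha b hb hab
    rw [Function.onFun, ← disjoint_coe, coe_incidenceFinset, coe_incidenceFinset,
      Set.disjoint_iff_inter_eq_empty]
    exact G.incidenceSet_inter_incidenceSet_of_not_adj (hs ha hb hab) hab
  calc ∑ v ∈ s, G.degree v = #(s.biUnion (G.incidenceFinset ·)) := by
        simp_rw [card_biUnion hdisj, card_incidenceFinset_eq_degree]
    _ ≤ #G.edgeFinset := card_le_card (biUnion_subset.2 fun v _ => G.incidenceFinset_subset v)

theorem sum_degree_neighborFinset_le_card_edgeFinset (h : G.CliqueFree 3) (v : V) :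
    ∑ u ∈ G.neighborFinset v, G.degree u ≤ #G.edgeFinset :=
  IsIndepSet.sum_degree_le_card_edgeFinset <| by
    simpa using G.isIndepSet_neighborSet_of_triangleFree h v

theorem sq_le_card_edgeFinset_of_mem_spectrum (h : G.CliqueFree 3) {μ : ℝ}
    (hμ : μ ∈ spectrum ℝ (G.adjMatrix ℝ)) : μ ^ 2 ≤ #G.edgeFinset := by
  have hrow (v : V) : ∑ w, ‖(G.adjMatrix ℝ * G.adjMatrix ℝ) v w‖ ≤ #G.edgeFinset := by
    have hnonneg (w : V) : 0 ≤ (G.adjMatrix ℝ * G.adjMatrix ℝ) v w := by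
      rw [adjMatrix_mul_apply]
      exact sum_nonneg fun u _ => by by_cases hu : G.Adj u w <;> simp [hu]
    simp_rw [Real.norm_of_nonneg (hnonneg _), sum_adjMatrix_mul_self_apply]
    exact_mod_cast sum_degree_neighborFinset_le_card_edgeFinset h v
  have hμ2 : μ ^ 2 ∈ spectrum ℝ (G.adjMatrix ℝ * G.adjMatrix ℝ) :=
    sq (G.adjMatrix ℝ) ▸ spectrum.pow_mem_pow _ 2 hμ
  simpa using Matrix.norm_le_of_mem_spectrum hrow hμ2

end SimpleGraph

theorem stmt6 {V : Type*} [Fintype V] [DecidableEq V] (G : SimpleGraph V)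
    [DecidableRel G.Adj] (hbip : G.Colorable 2) (ρ : ℝ)
    (hρ : IsGreatest (spectrum ℝ (G.adjMatrix ℝ)) ρ) :
    ρ ≤ Real.sqrt (G.edgeFinset.card : ℝ) :=
  Real.le_sqrt_of_sq_le <|
    G.sq_le_card_edgeFinset_of_mem_spectrum (hbip.cliqueFree (by norm_num)) hρ.1
end

section
/- Let G be a connected graph, x its principal (Perron) eigenvector, and u, v two vertices with x(v) ≥ x(u). Let S ⊆ N(u) \ N(v) with v ∉ S and S nonempty. Then the graph G' obtained by deleting the edges {wu : w ∈ S} and adding the edges {wv : w ∈ S} satisfies ρ(G') > ρ(G). -/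
/-!
Moving the edges between `u` and `S` over to `v` changes the adjacency matrix by the symmetric
rank-two update `(e_v - e_u) χ_Sᵀ + χ_S (e_v - e_u)ᵀ`. Hence the Rayleigh quotient of `x` grows by
`2 (x_v - x_u) ∑_S x ≥ 0`, and since `ρ'` dominates every Rayleigh quotient of `G'`, `ρ ≤ ρ'`.
If the Rayleigh bound for `G'` were attained at `x`, then `x` would be a `ρ'`-eigenvector of `G'`;
but row `v` of `G'` gains the neighbours `S`, so `ρ' x_v = ρ x_v + ∑_S x > ρ x_v`.
-/

open Matrix

namespace Matrix

variable {n : Type*} [Fintype n] [DecidableEq n] {A : Matrix n n ℝ} {ρ : ℝ}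

lemma posSemidef_algebraMap_sub_of_isGreatest_spectrum (hA : A.IsHermitian)
    (hρ : IsGreatest (spectrum ℝ A) ρ) : (algebraMap ℝ (Matrix n n ℝ) ρ - A).PosSemidef := by
  refine posSemidef_iff_isHermitian_and_spectrum_nonneg.mpr ⟨?_, ?_⟩
  · simpa [IsHermitian, Algebra.algebraMap_eq_smul_one] using hA.eq
  · rw [← spectrum.singleton_sub_eq]
    rintro _ ⟨_, rfl, μ, hμ, rfl⟩
    exact sub_nonneg.mpr (hρ.2 hμ)

lemma dotProduct_mulVec_le_of_isGreatest_spectrum (hA : A.IsHermitian)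
    (hρ : IsGreatest (spectrum ℝ A) ρ) (y : n → ℝ) : y ⬝ᵥ A *ᵥ y ≤ ρ * (y ⬝ᵥ y) := by
  have h := (posSemidef_algebraMap_sub_of_isGreatest_spectrum hA hρ).dotProduct_mulVec_nonneg y
  simpa [sub_mulVec, Algebra.algebraMap_eq_smul_one, smul_mulVec] using h

lemma mulVec_eq_smul_of_dotProduct_mulVec_eq (hA : A.IsHermitian)
    (hρ : IsGreatest (spectrum ℝ A) ρ) {y : n → ℝ} (hy : y ⬝ᵥ A *ᵥ y = ρ * (y ⬝ᵥ y)) :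
    A *ᵥ y = ρ • y := by
  have h := (posSemidef_algebraMap_sub_of_isGreatest_spectrum hA hρ).dotProduct_mulVec_zero_iff y
  simp only [star_trivial, sub_mulVec, dotProduct_sub, Algebra.algebraMap_eq_smul_one,
    smul_mulVec, one_mulVec, dotProduct_smul, smul_eq_mul, hy, sub_self, true_iff] at h
  exact (sub_eq_zero.mp h).symm

lemma indicator_dotProduct {α : Type*} [CommRing α] (S : Finset n) (x : n → α) :
    (S : Set n).indicator 1 ⬝ᵥ x = ∑ w ∈ S, x w := by
  simp [dotProduct, Set.indicator_apply, Finset.sum_ite_mem]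

end Matrix

namespace SimpleGraph

variable {V : Type*} [DecidableEq V] {G G' : SimpleGraph V} [DecidableRel G.Adj]
  [DecidableRel G'.Adj] {u v : V} {S : Finset V}

def IsRewiring (G G' : SimpleGraph V) (u v : V) (S : Finset V) : Prop :=
  ∀ a b, G'.Adj a b ↔
    ((G.Adj a b ∧ ¬ ((a = u ∧ b ∈ S) ∨ (b = u ∧ a ∈ S))) ∨ (a = v ∧ b ∈ S) ∨ (b = v ∧ a ∈ S))

namespace IsRewiring

lemma adjMatrix_eq {α : Type*} [Ring α] (h : G.IsRewiring G' u v S)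
    (hS : ∀ w ∈ S, G.Adj u w ∧ ¬ G.Adj v w) (hvS : v ∉ S) :
    G'.adjMatrix α = G.adjMatrix α
      + vecMulVec (Pi.single v 1 - Pi.single u 1) ((S : Set V).indicator 1)
      + vecMulVec ((S : Set V).indicator 1) (Pi.single v 1 - Pi.single u 1) := by
  ext a b
  simp only [adjMatrix_apply, Matrix.add_apply, vecMulVec_apply, Pi.sub_apply,
    Pi.single_apply, Set.indicator_apply, Finset.mem_coe, Pi.one_apply, h a b]
  have huS : u ∉ S := fun hu => G.irrefl (hS u hu).1
  have := hS a
  have := hS b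
  split_ifs <;> grind [Adj.symm]

variable [Fintype V] {α : Type*} [CommRing α]

lemma mulVec_eq (h : G.IsRewiring G' u v S) (hS : ∀ w ∈ S, G.Adj u w ∧ ¬ G.Adj v w)
    (hvS : v ∉ S) (x : V → α) :
    G'.adjMatrix α *ᵥ x = G.adjMatrix α *ᵥ x + (∑ w ∈ S, x w) • (Pi.single v 1 - Pi.single u 1)
      + (x v - x u) • (S : Set V).indicator 1 := by
  rw [h.adjMatrix_eq hS hvS, add_mulVec, add_mulVec, vecMulVec_mulVec, vecMulVec_mulVec,
    indicator_dotProduct, sub_dotProduct, single_dotProduct, single_dotProduct]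
  simp only [op_smul_eq_smul, one_mul]

lemma dotProduct_mulVec_eq (h : G.IsRewiring G' u v S)
    (hS : ∀ w ∈ S, G.Adj u w ∧ ¬ G.Adj v w) (hvS : v ∉ S) (x : V → α) :
    x ⬝ᵥ G'.adjMatrix α *ᵥ x = x ⬝ᵥ G.adjMatrix α *ᵥ x + 2 * (x v - x u) * ∑ w ∈ S, x w := by
  rw [h.mulVec_eq hS hvS, dotProduct_add, dotProduct_add, dotProduct_smul, dotProduct_smul,
    dotProduct_sub, dotProduct_single, dotProduct_single,
    dotProduct_comm x ((S : Set V).indicator 1), indicator_dotProduct, smul_eq_mul, smul_eq_mul]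
  ring

lemma mulVec_apply_eq (h : G.IsRewiring G' u v S) (hS : ∀ w ∈ S, G.Adj u w ∧ ¬ G.Adj v w)
    (hvS : v ∉ S) (huv : u ≠ v) (x : V → α) :
    (G'.adjMatrix α *ᵥ x) v = (G.adjMatrix α *ᵥ x) v + ∑ w ∈ S, x w := by
  rw [h.mulVec_eq hS hvS]
  simp [huv.symm, hvS]

end IsRewiring

end SimpleGraph

theorem stmt11_general {V : Type*} [Fintype V] [DecidableEq V]
    (G G' : SimpleGraph V) [DecidableRel G.Adj] [DecidableRel G'.Adj]
    (u v : V) (S : Finset V) (hSne : S.Nonempty)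
    (hS : ∀ w ∈ S, G.Adj u w ∧ ¬ G.Adj v w) (hvS : v ∉ S)
    (x : V → ℝ) (hpos : ∀ w, 0 < x w)
    (ρ : ℝ)
    (heig : (G.adjMatrix ℝ).mulVec x = ρ • x)
    (hxuv : x u ≤ x v)
    (hG' : ∀ a b, G'.Adj a b ↔
      ((G.Adj a b ∧ ¬ ((a = u ∧ b ∈ S) ∨ (b = u ∧ a ∈ S))) ∨
        (a = v ∧ b ∈ S) ∨ (b = v ∧ a ∈ S)))
    (ρ' : ℝ) (hρ' : IsGreatest (spectrum ℝ (G'.adjMatrix ℝ)) ρ') :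
    ρ < ρ' := by
  have hrew : G.IsRewiring G' u v S := hG'
  obtain ⟨w₀, hw₀⟩ := hSne
  have huv : u ≠ v := fun h => (hS w₀ hw₀).2 (h ▸ (hS w₀ hw₀).1)
  have hσ : 0 < ∑ w ∈ S, x w := Finset.sum_pos (fun w _ => hpos w) ⟨w₀, hw₀⟩
  have hxx : 0 < x ⬝ᵥ x :=
    Finset.sum_pos (fun w _ => mul_pos (hpos w) (hpos w)) ⟨w₀, Finset.mem_univ w₀⟩
  have hρx : x ⬝ᵥ G.adjMatrix ℝ *ᵥ x = ρ * (x ⬝ᵥ x) := by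
    rw [heig, dotProduct_smul, smul_eq_mul]
  have hA' := G'.isHermitian_adjMatrix ℝ
  rcases (dotProduct_mulVec_le_of_isGreatest_spectrum hA' hρ' x).lt_or_eq with hlt | heq
  · refine lt_of_mul_lt_mul_right ?_ hxx.le
    calc ρ * (x ⬝ᵥ x) = x ⬝ᵥ G.adjMatrix ℝ *ᵥ x := hρx.symm
      _ ≤ x ⬝ᵥ G'.adjMatrix ℝ *ᵥ x := by
        rw [hrew.dotProduct_mulVec_eq hS hvS x]
        have := mul_nonneg (mul_nonneg zero_le_two (sub_nonneg.mpr hxuv)) hσ.le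
        linarith
      _ < ρ' * (x ⬝ᵥ x) := hlt
  · have hv := hrew.mulVec_apply_eq hS hvS huv x
    rw [mulVec_eq_smul_of_dotProduct_mulVec_eq hA' hρ' heq, heig] at hv
    simp only [Pi.smul_apply, smul_eq_mul] at hv
    exact lt_of_mul_lt_mul_right (by linarith : ρ * x v < ρ' * x v) (hpos v).le

theorem stmt11 {V : Type*} [Fintype V] [DecidableEq V]
    (G G' : SimpleGraph V) [DecidableRel G.Adj] [DecidableRel G'.Adj]
    (hconn : G.Connected) (u v : V) (S : Finset V) (hSne : S.Nonempty)
    (hS : ∀ w ∈ S, G.Adj u w ∧ ¬ G.Adj v w) (hvS : v ∉ S)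
    (x : V → ℝ) (hpos : ∀ w, 0 < x w) (hunit : ∑ w, x w ^ 2 = 1)
    (ρ : ℝ) (hρ : IsGreatest (spectrum ℝ (G.adjMatrix ℝ)) ρ)
    (heig : (G.adjMatrix ℝ).mulVec x = ρ • x)
    (hxuv : x u ≤ x v)
    (hG' : ∀ a b, G'.Adj a b ↔
      ((G.Adj a b ∧ ¬ ((a = u ∧ b ∈ S) ∨ (b = u ∧ a ∈ S))) ∨
        (a = v ∧ b ∈ S) ∨ (b = v ∧ a ∈ S)))
    (ρ' : ℝ) (hρ' : IsGreatest (spectrum ℝ (G'.adjMatrix ℝ)) ρ') :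
    ρ < ρ' :=
  stmt11_general G G' u v S hSne hS hvS x hpos ρ heig hxuv hG' ρ' hρ'
end

section
/- Let G be a connected irregular bipartite graph on n vertices with maximum degree Δ, and suppose Δ > n - Δ. Then ρ(G) ≤ ρ(K_{Δ, n-Δ}) = √(Δ(n-Δ)), with equality if and only if G is isomorphic to K_{Δ, n-Δ}. -/
/-!
Write `t(u) = ∑_{k ∼ u} deg k` for the 2-degree of `u`. If `A x = ρ x`, then `A² x = ρ² x`, and
reading this at a vertex where `|x|` is maximal gives `ρ² ≤ max_u t(u)`. If `T` is the colour class
of a vertex of degree `Δ` and `Q` the other one, then `|Q| ≥ Δ`, so `|T| ≤ n - Δ`, and every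
2-degree is at most `Δ |T|` (a vertex of `T` has neighbours of degree `≤ |T|`, a vertex of `Q` has
at most `|T|` neighbours). Hence `ρ² ≤ Δ (n - Δ)`.

If equality holds, every inequality is tight at a vertex where `|x|` is maximal; tightness then
passes to all vertices at distance two, hence, by connectedness, to the whole colour class of
that vertex, and tight 2-degrees on one class force it to be joined to all of the other class, of
size `Δ`. Conversely `K_{a,b}` has the eigenvector equal to `√b` on its `a`-side and `√a` on its
`b`-side, with eigenvalue `√(ab)`.
-/

open Matrix Finset

theorem Bool.eq_of_ne_of_ne {x y z : Bool} (hxy : x ≠ y) (hxz : x ≠ z) : y = z :=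
  (Bool.eq_not_of_ne hxy.symm).trans (Bool.eq_not_of_ne hxz.symm).symm

theorem Bool.ne_iff_eq_iff_ne {x y : Bool} (a : Bool) : x ≠ y ↔ (x = a ↔ y ≠ a) := by
  cases x <;> cases y <;> cases a <;> decide

theorem Matrix.mem_spectrum_iff_exists_mulVec_eq_smul_s12 {K n : Type*} [Field K] [Fintype n]
    [DecidableEq n] (A : Matrix n n K) (μ : K) :
    μ ∈ spectrum K A ↔ ∃ v ≠ 0, A *ᵥ v = μ • v := by
  simp only [← Matrix.spectrum_toLin', ← Module.End.hasEigenvalue_iff_mem_spectrum,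
    Module.End.hasEigenvalue_iff, ne_eq, Submodule.eq_bot_iff, not_forall,
    Module.End.mem_eigenspace_iff, Matrix.toLin'_apply, exists_prop, and_comm]

theorem exists_forall_abs_le_of_ne_zero {V : Type*} [Finite V] {x : V → ℝ} (hx0 : x ≠ 0) :
    ∃ i, 0 < |x i| ∧ ∀ j, |x j| ≤ |x i| := by
  obtain ⟨j, hj⟩ := Function.ne_iff.1 hx0
  have : Nonempty V := ⟨j⟩
  obtain ⟨i, hi⟩ := Finite.exists_max fun v ↦ |x v|
  exact ⟨i, (abs_pos.2 hj).trans_le (hi j), hi⟩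

namespace SimpleGraph

theorem Walk.end_mem_of_even_length {V : Type*} {G : SimpleGraph V} {P : V → Prop}
    (hP : ∀ ⦃u k v⦄, G.Adj u k → G.Adj k v → P u → P v) {u v : V} (p : G.Walk u v)
    (hp : Even p.length) (hu : P u) : P v := by
  suffices (P u → Even p.length → P v) ∧
      ((∀ k, G.Adj u k → P k) → Odd p.length → P v) from this.1 hu hp
  clear hu hp
  induction p with
  | nil => exact ⟨fun h _ ↦ h, fun _ h ↦ absurd h (by simp)⟩
  | cons h p ih =>
    rw [length_cons, Nat.even_add_one, Nat.odd_add_one, Nat.not_even_iff_odd, Nat.not_odd_iff_even]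
    exact ⟨fun hu hp ↦ ih.2 (fun k hk ↦ hP h hk hu) hp, fun hu hp ↦ ih.1 (hu _ h) hp⟩

theorem sqrt_mul_mem_spectrum_adjMatrix_completeBipartiteGraph (α β : Type*) [Fintype α]
    [Fintype β] [DecidableEq α] [DecidableEq β] [Nonempty α] [Nonempty β]
    [DecidableRel (completeBipartiteGraph α β).Adj] :
    √((Fintype.card α : ℝ) * Fintype.card β) ∈
      spectrum ℝ ((completeBipartiteGraph α β).adjMatrix ℝ) := by
  rw [Matrix.mem_spectrum_iff_exists_mulVec_eq_smul_s12]
  refine ⟨Sum.elim (fun _ ↦ √(Fintype.card β : ℝ)) (fun _ ↦ √(Fintype.card α : ℝ)),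
    fun h ↦ ?_, ?_⟩
  · simpa using congrFun h (Sum.inl (Classical.arbitrary α))
  · rw [Real.sqrt_mul (Nat.cast_nonneg _)]
    ext (i | j) <;> simp [mulVec, dotProduct, adjMatrix_apply]
    all_goals ring_nf; simp [Real.sq_sqrt, mul_comm]

section Finite

variable {V : Type*} [Fintype V] {G : SimpleGraph V}

theorem nonempty_iso_completeBipartiteGraph (s : Finset V)
    (h : ∀ u v, G.Adj u v ↔ (u ∈ s ↔ v ∉ s)) :
    Nonempty (G ≃g completeBipartiteGraph (Fin #s) (Fin (Fintype.card V - #s))) := by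
  classical
  let e : G ≃g completeBipartiteGraph s {v // v ∉ s} :=
    { toEquiv := (Equiv.sumCompl (· ∈ s)).symm
      map_rel_iff' := fun {u v} ↦ by
        by_cases hu : u ∈ s <;> by_cases hv : v ∈ s <;> simp [Equiv.sumCompl, h, hu, hv] }
  exact ⟨e.trans (completeBipartiteGraphCongr (Fintype.equivFinOfCardEq (by simp))
    (Fintype.equivFinOfCardEq (by simp [Fintype.card_subtype_compl])))⟩

theorem Coloring.card_filter_add_card_filter_not (c : G.Coloring Bool) (a : Bool) :
    #{v | c v = a} + #{v | c v = !a} = Fintype.card V := by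
  simpa [← Bool.eq_not_iff] using
    Finset.card_filter_add_card_filter_not (s := univ) (fun v ↦ c v = a)

theorem Coloring.nonempty_iso_completeBipartiteGraph (c : G.Coloring Bool)
    (h : ∀ u v, G.Adj u v ↔ c u ≠ c v) (a : Bool) :
    Nonempty (G ≃g completeBipartiteGraph (Fin #{v | c v = a})
      (Fin (Fintype.card V - #{v | c v = a}))) :=
  SimpleGraph.nonempty_iso_completeBipartiteGraph _ fun u v ↦ by
    rw [h, Bool.ne_iff_eq_iff_ne a]
    simp only [mem_filter_univ]

variable [DecidableRel G.Adj]

theorem Iso.spectrum_adjMatrix_eq {R W : Type*} [CommRing R] [DecidableEq V] [Fintype W]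
    [DecidableEq W] {H : SimpleGraph W} [DecidableRel H.Adj] (e : G ≃g H) :
    spectrum R (G.adjMatrix R) = spectrum R (H.adjMatrix R) := by
  rw [← e.reindex_adjMatrix R]
  exact (AlgEquiv.spectrum_eq (reindexAlgEquiv R R e.toEquiv) _).symm

variable (G) in
def twoDegree (u : V) : ℕ := ∑ k ∈ G.neighborFinset u, G.degree k

theorem twoDegree_le_degree_mul {u : V} {D : ℕ} (hD : ∀ k ∈ G.neighborFinset u, G.degree k ≤ D) :
    G.twoDegree u ≤ G.degree u * D := by
  simpa [twoDegree] using sum_le_sum hD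

section Spectral

variable {x : V → ℝ} {μ : ℝ}

theorem adjMatrix_mulVec_mulVec_apply (x : V → ℝ) (u : V) :
    (G.adjMatrix ℝ *ᵥ (G.adjMatrix ℝ *ᵥ x)) u =
      ∑ k ∈ G.neighborFinset u, ∑ j ∈ G.neighborFinset k, x j := by
  simp only [adjMatrix_mulVec_apply]

theorem sq_mul_abs_le_sum_sum_abs (hx : G.adjMatrix ℝ *ᵥ x = μ • x) (u : V) :
    μ ^ 2 * |x u| ≤ ∑ k ∈ G.neighborFinset u, ∑ j ∈ G.neighborFinset k, |x j| := by
  have hx2 : G.adjMatrix ℝ *ᵥ (G.adjMatrix ℝ *ᵥ x) = μ ^ 2 • x := by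
    rw [hx, mulVec_smul, hx, smul_smul, sq]
  calc μ ^ 2 * |x u| = |(G.adjMatrix ℝ *ᵥ (G.adjMatrix ℝ *ᵥ x)) u| := by
        rw [hx2, Pi.smul_apply, smul_eq_mul, abs_mul, abs_sq]
    _ ≤ _ := by
      rw [adjMatrix_mulVec_mulVec_apply]
      exact (abs_sum_le_sum_abs _ _).trans (sum_le_sum fun k _ ↦ abs_sum_le_sum_abs _ _)

theorem sum_sum_abs_le_twoDegree_mul {M : ℝ} (hM : ∀ j, |x j| ≤ M) (u : V) :
    ∑ k ∈ G.neighborFinset u, ∑ j ∈ G.neighborFinset k, |x j| ≤ G.twoDegree u * M := by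
  calc ∑ k ∈ G.neighborFinset u, ∑ j ∈ G.neighborFinset k, |x j|
      ≤ ∑ k ∈ G.neighborFinset u, ∑ j ∈ G.neighborFinset k, M :=
        sum_le_sum fun k _ ↦ sum_le_sum fun j _ ↦ hM j
    _ = G.twoDegree u * M := by simp [twoDegree, sum_mul]

theorem sq_le_of_forall_twoDegree_le (hx0 : x ≠ 0) (hx : G.adjMatrix ℝ *ᵥ x = μ • x) {C : ℕ}
    (hC : ∀ u, G.twoDegree u ≤ C) : μ ^ 2 ≤ C := by
  obtain ⟨i, hi0, hi⟩ := exists_forall_abs_le_of_ne_zero hx0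
  refine le_of_mul_le_mul_right ?_ hi0
  calc μ ^ 2 * |x i| ≤ G.twoDegree i * |x i| :=
        (sq_mul_abs_le_sum_sum_abs hx i).trans (sum_sum_abs_le_twoDegree_mul hi i)
    _ ≤ C * |x i| := by gcongr; exact_mod_cast hC i

theorem twoDegree_eq_and_abs_eq_of_sq_eq (hx : G.adjMatrix ℝ *ᵥ x = μ • x) {C : ℕ}
    (hC : ∀ u, G.twoDegree u ≤ C) (hμ : μ ^ 2 = C) {M : ℝ} (hM0 : 0 < M) (hM : ∀ j, |x j| ≤ M)
    {u : V} (hu : |x u| = M) :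
    G.twoDegree u = C ∧ ∀ k ∈ G.neighborFinset u, ∀ j ∈ G.neighborFinset k, |x j| = M := by
  have hle := sq_mul_abs_le_sum_sum_abs hx u
  rw [hμ, hu] at hle
  have hup : ∑ k ∈ G.neighborFinset u, ∑ j ∈ G.neighborFinset k, |x j| ≤
      ∑ k ∈ G.neighborFinset u, ∑ j ∈ G.neighborFinset k, M :=
    sum_le_sum fun k _ ↦ sum_le_sum fun j _ ↦ hM j
  have htwo : ∑ k ∈ G.neighborFinset u, ∑ j ∈ G.neighborFinset k, M = G.twoDegree u * M := by
    simp [twoDegree, sum_mul]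
  have hCu : (G.twoDegree u : ℝ) * M ≤ C * M := by gcongr; exact_mod_cast hC u
  constructor
  · exact_mod_cast le_antisymm (le_of_mul_le_mul_right hCu hM0)
      (le_of_mul_le_mul_right (by linarith) hM0)
  · intro k hk j hj
    have hk' := (sum_eq_sum_iff_of_le fun k _ ↦ sum_le_sum fun j _ ↦ hM j).1 (by linarith) k hk
    exact (sum_eq_sum_iff_of_le fun j _ ↦ hM j).1 hk' j hj

theorem exists_forall_twoDegree_eq_of_sq_eq (hconn : G.Connected) (c : G.Coloring Bool)
    (hx0 : x ≠ 0) (hx : G.adjMatrix ℝ *ᵥ x = μ • x) {C : ℕ} (hC : ∀ u, G.twoDegree u ≤ C)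
    (hμ : μ ^ 2 = C) : ∃ b, ∀ u, c u = b → G.twoDegree u = C := by
  obtain ⟨i, hi0, hi⟩ := exists_forall_abs_le_of_ne_zero hx0
  have rigid := fun {u} ↦ twoDegree_eq_and_abs_eq_of_sq_eq hx hC hμ hi0 hi (u := u)
  refine ⟨c i, fun u hu ↦ (rigid ?_).1⟩
  obtain ⟨p⟩ := hconn.preconnected i u
  refine p.end_mem_of_even_length (P := fun v ↦ |x v| = |x i|) ?_ ?_ rfl
  · intro v k w hvk hkw hv
    exact (rigid hv).2 k (by simpa using hvk) w (by simpa using hkw)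
  · rw [c.even_length_iff_congr, hu]

end Spectral

namespace Coloring

variable (c : G.Coloring Bool) {u : V} {a : Bool}

theorem neighborFinset_subset_filter (hu : c u ≠ a) :
    G.neighborFinset u ⊆ ({v | c v = a} : Finset V) := fun v hv ↦
  (mem_filter_univ v).2 (Bool.eq_of_ne_of_ne (c.valid ((mem_neighborFinset _ _ _).1 hv)) hu)

theorem degree_le_card_filter (hu : c u ≠ a) : G.degree u ≤ #{v | c v = a} := by
  rw [← card_neighborFinset_eq_degree]
  exact card_le_card (c.neighborFinset_subset_filter hu)

theorem neighborFinset_eq_filter (hu : c u ≠ a) (h : #{v | c v = a} ≤ G.degree u) :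
    G.neighborFinset u = ({v | c v = a} : Finset V) :=
  eq_of_subset_of_card_le (c.neighborFinset_subset_filter hu) (by simpa using h)

theorem adj_iff_ne_of_forall_neighborFinset_eq
    (h : ∀ u, c u ≠ a → G.neighborFinset u = ({v | c v = a} : Finset V)) (u v : V) :
    G.Adj u v ↔ c u ≠ c v := by
  refine ⟨c.valid, fun huv ↦ ?_⟩
  by_cases hu : c u = a
  · have hv : c v ≠ a := hu ▸ huv.symm
    have : u ∈ G.neighborFinset v := h v hv ▸ (mem_filter_univ u).2 hu
    exact ((mem_neighborFinset _ _ _).1 this).symm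
  · have : v ∈ G.neighborFinset u := h u hu ▸ (mem_filter_univ v).2 (Bool.eq_of_ne_of_ne huv hu)
    exact (mem_neighborFinset _ _ _).1 this

theorem twoDegree_le_mul_card {Δ : ℕ} (hΔ : ∀ v, G.degree v ≤ Δ) (a : Bool) (u : V) :
    G.twoDegree u ≤ Δ * #{v | c v = a} := by
  by_cases hu : c u = a
  · have hD : ∀ k ∈ G.neighborFinset u, G.degree k ≤ #{v | c v = a} := fun k hk ↦
      c.degree_le_card_filter (hu ▸ (c.valid ((mem_neighborFinset _ _ _).1 hk)).symm)
    exact (twoDegree_le_degree_mul hD).trans (Nat.mul_le_mul_right _ (hΔ u))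
  · calc G.twoDegree u ≤ G.degree u * Δ := twoDegree_le_degree_mul fun k _ ↦ hΔ k
      _ ≤ #{v | c v = a} * Δ := Nat.mul_le_mul_right _ (c.degree_le_card_filter hu)
      _ = Δ * #{v | c v = a} := Nat.mul_comm _ _

theorem adj_iff_ne_of_forall_twoDegree_eq {Δ : ℕ} (hΔ : ∀ v, G.degree v ≤ Δ)
    (hcard : #{v | c v = !a} = Δ) (b : Bool)
    (h : ∀ u, c u = b → G.twoDegree u = Δ * #{v | c v = a}) (u v : V) :
    G.Adj u v ↔ c u ≠ c v := by
  rcases Bool.eq_or_eq_not b a with rfl | rfl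
  · refine c.adj_iff_ne_of_forall_neighborFinset_eq (a := !b) (fun u hu ↦ ?_) u v
    have hu : c u = b := by simpa using hu
    refine c.neighborFinset_eq_filter (by simp [hu]) ?_
    have hD : ∀ k ∈ G.neighborFinset u, G.degree k ≤ #{v | c v = b} := fun k hk ↦
      c.degree_le_card_filter (hu ▸ (c.valid ((mem_neighborFinset _ _ _).1 hk)).symm)
    have hpos : 0 < #{v | c v = b} := card_pos.2 ⟨u, (mem_filter_univ u).2 hu⟩
    rw [hcard]
    exact Nat.le_of_mul_le_mul_right ((h u hu).symm.le.trans (twoDegree_le_degree_mul hD)) hpos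
  · refine c.adj_iff_ne_of_forall_neighborFinset_eq (a := a) (fun u hu ↦ ?_) u v
    have hu' : c u = !a := Bool.eq_not_of_ne hu
    have hpos : 0 < Δ := hcard ▸ card_pos.2 ⟨u, (mem_filter_univ u).2 hu'⟩
    refine c.neighborFinset_eq_filter hu (Nat.le_of_mul_le_mul_left ?_ hpos)
    calc Δ * #{v | c v = a} = G.twoDegree u := (h u hu').symm
      _ ≤ G.degree u * Δ := twoDegree_le_degree_mul fun k _ ↦ hΔ k
      _ = Δ * G.degree u := Nat.mul_comm _ _

end Coloring

end Finite

end SimpleGraph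

open SimpleGraph

theorem stmt12_general {V : Type*} [Fintype V] [DecidableEq V]
    (G : SimpleGraph V) [DecidableRel G.Adj] (hconn : G.Connected)
    (hbip : G.Colorable 2)
    (n : ℕ) (hn : Fintype.card V = n)
    (Δ : ℕ) (hΔ : ∀ v, G.degree v ≤ Δ) (hex : ∃ v, G.degree v = Δ)
    (hbig : Δ > n - Δ)
    [DecidableRel (completeBipartiteGraph (Fin Δ) (Fin (n - Δ))).Adj]
    (ρ : ℝ) (hρ : IsGreatest (spectrum ℝ (G.adjMatrix ℝ)) ρ) :
    ρ ≤ Real.sqrt ((Δ : ℝ) * (n - Δ : ℕ)) ∧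
      (ρ = Real.sqrt ((Δ : ℝ) * (n - Δ : ℕ)) ↔
        Nonempty (G ≃g completeBipartiteGraph (Fin Δ) (Fin (n - Δ)))) := by
  obtain ⟨c⟩ : Nonempty (G.Coloring Bool) := ⟨G.recolorOfEquiv finTwoEquiv hbip.some⟩
  obtain ⟨v₀, hv₀⟩ := hex
  set a := c v₀
  have hQ : Δ ≤ #{v | c v = !a} := hv₀ ▸ c.degree_le_card_filter (by simp [a])
  have hTQ := c.card_filter_add_card_filter_not a
  have hT : 0 < #{v | c v = a} := card_pos.2 ⟨v₀, (mem_filter_univ v₀).2 rfl⟩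
  have hrow := c.twoDegree_le_mul_card hΔ a
  obtain ⟨x, hx0, hx⟩ := (mem_spectrum_iff_exists_mulVec_eq_smul_s12 _ _).1 hρ.1
  have hρT : ρ ^ 2 ≤ (Δ * #{v | c v = a} : ℕ) := sq_le_of_forall_twoDegree_le hx0 hx hrow
  have hTn : Δ * #{v | c v = a} ≤ Δ * (n - Δ) := Nat.mul_le_mul_left _ (by omega)
  have hbound : ρ ≤ √(Δ * (n - Δ : ℕ)) := (le_abs_self ρ).trans <| Real.abs_le_sqrt <| by
    exact_mod_cast hρT.trans (by exact_mod_cast hTn)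
  refine ⟨hbound, fun heq ↦ ?_, fun ⟨e⟩ ↦ ?_⟩
  · have hρ2 : ρ ^ 2 = (Δ * (n - Δ) : ℕ) := by
      rw [heq, Real.sq_sqrt (by positivity)]; push_cast; ring
    have hTeq : Δ * #{v | c v = a} = Δ * (n - Δ) :=
      le_antisymm hTn (by exact_mod_cast hρ2 ▸ hρT)
    have hQeq : #{v | c v = !a} = Δ := by
      have := Nat.eq_of_mul_eq_mul_left (by omega) hTeq; omega
    obtain ⟨b, hb⟩ := exists_forall_twoDegree_eq_of_sq_eq hconn c hx0 hx hrow (by rw [hρ2, hTeq])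
    have := c.nonempty_iso_completeBipartiteGraph
      (c.adj_iff_ne_of_forall_twoDegree_eq hΔ hQeq b hb) !a
    rwa [hQeq, hn] at this
  · have : NeZero Δ := ⟨by omega⟩
    have : NeZero (n - Δ) := ⟨by omega⟩
    rw [e.spectrum_adjMatrix_eq] at hρ
    refine le_antisymm hbound (hρ.2 ?_)
    simpa using sqrt_mul_mem_spectrum_adjMatrix_completeBipartiteGraph (Fin Δ) (Fin (n - Δ))

theorem stmt12 {V : Type*} [Fintype V] [DecidableEq V]
    (G : SimpleGraph V) [DecidableRel G.Adj] (hconn : G.Connected)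
    (hbip : G.Colorable 2) (hirr : ¬ ∃ d, G.IsRegularOfDegree d)
    (n : ℕ) (hn : Fintype.card V = n)
    (Δ : ℕ) (hΔ : ∀ v, G.degree v ≤ Δ) (hex : ∃ v, G.degree v = Δ)
    (hbig : Δ > n - Δ)
    [DecidableRel (completeBipartiteGraph (Fin Δ) (Fin (n - Δ))).Adj]
    (ρ : ℝ) (hρ : IsGreatest (spectrum ℝ (G.adjMatrix ℝ)) ρ) :
    ρ ≤ Real.sqrt ((Δ : ℝ) * (n - Δ : ℕ)) ∧
      (ρ = Real.sqrt ((Δ : ℝ) * (n - Δ : ℕ)) ↔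
        Nonempty (G ≃g completeBipartiteGraph (Fin Δ) (Fin (n - Δ)))) :=
  stmt12_general G hconn hbip n hn Δ hΔ hex hbig ρ hρ
end
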